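/- Let (B_*, ⋆, Δ) be a BV-algebra, H_* a graded module with maps q: B_i → H_i and T: H_{i−2} → B_{i−1} satisfying Δ = T∘q and q∘T = 0. Define {x,y} := (−1)^{|x|} q(T(x) ⋆ T(y)) on H_*[2] and let {a,b}_Δ := (−1)^{|a|} Δ(a⋆b) − (−1)^{|a|} Δ(a)⋆b − a⋆Δ(b) be the Gerstenhaber bracket on B_*[1]. Then T(\{x,y\}) = −{T(x), T(y)}_Δ; equivalently, with the shift operator s(x) = (−1)^{|x|}x, the map s∘T: H_*[2] → B_*[1] is a morphism of graded Lie algebras. -/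
import Mathlib


/-- The sign `(−1)ⁿ` for an integer `n`. -/
def gsgn (n : ℤ) : ℤ := (((-1 : ℤˣ) ^ n : ℤˣ) : ℤ)

/-- The Gerstenhaber bracket `{a,b}_Δ := (−1)^{|a|} Δ(a⋆b) − (−1)^{|a|} Δ(a)⋆b − a⋆Δ(b)`
underlying a BV-algebra; here `i = |a|`. -/
def bvBracket {V : Type*} [NonUnitalRing V] (Δ : V → V) (i : ℤ) (a b : V) : V :=
  gsgn i • Δ (a * b) - gsgn i • (Δ a * b) - a * Δ b

/-- The string-type bracket `{x,y} := (−1)^{|x|} q(T(x) ⋆ T(y))`; here `i = |x|`. -/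
def gysinBracket {V W : Type*} [NonUnitalRing V] [AddCommGroup W]
    (q : V → W) (T : W → V) (i : ℤ) (x y : W) : W :=
  gsgn i • q (T x * T y)

/-- Let `(B_*, ⋆, Δ)` be a BV-algebra and `H_*` a graded module with maps `q : B_i → H_i`
and `T : H_{i−2} → B_{i−1}` satisfying `Δ = T ∘ q` and `q ∘ T = 0` (consecutive maps of a
Gysin long exact sequence).  Define `{x,y} := (−1)^{|x|} q(T(x) ⋆ T(y))` on `H_*[2]` and let
`{a,b}_Δ := (−1)^{|a|} Δ(a⋆b) − (−1)^{|a|} Δ(a)⋆b − a⋆Δ(b)` be the Gerstenhaber bracket on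
`B_*[1]`.  Then `T({x,y}) = −{T(x), T(y)}_Δ` (note `T(x)` is homogeneous of degree `|x|+1`);
equivalently, with the shift operator `s(x) = (−1)^{|x|} x`, the map `s ∘ T : H_*[2] → B_*[1]`
is a morphism of graded Lie algebras. -/
theorem transfer_is_lie_algebra_morphism
    {k V W : Type*} [CommRing k] [NonUnitalRing V] [Module k V]
    [SMulCommClass k V V] [IsScalarTower k V V] [AddCommGroup W] [Module k W]
    (A : ℤ → AddSubgroup V) (HA : ℤ → AddSubgroup W)
    (Δ : V →ₗ[k] V) (q : V →ₗ[k] W) (T : W →ₗ[k] V)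
    -- BV-algebra structure on B
    (hgrade_mul : ∀ {i j : ℤ} {a b : V}, a ∈ A i → b ∈ A j → a * b ∈ A (i + j))
    (hcomm : ∀ {i j : ℤ} {a b : V}, a ∈ A i → b ∈ A j → a * b = gsgn (i * j) • (b * a))
    (hΔ_grade : ∀ {i : ℤ} {a : V}, a ∈ A i → Δ a ∈ A (i + 1))
    (hΔΔ : ∀ a : V, Δ (Δ a) = 0)
    (hBV : ∀ {i j l : ℤ} {a b c : V}, a ∈ A i → b ∈ A j → c ∈ A l →
      Δ (a * b * c) - Δ (a * b) * c - gsgn i • (a * Δ (b * c))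
          - gsgn ((i + 1) * j) • (b * Δ (a * c))
          + Δ a * b * c + gsgn i • (a * Δ b * c)
          + gsgn (i + j) • (a * b * Δ c) = 0)
    -- the maps respect the gradings
    (hq_grade : ∀ {i : ℤ} {a : V}, a ∈ A i → q a ∈ HA i)
    (hT_grade : ∀ {i : ℤ} {x : W}, x ∈ HA i → T x ∈ A (i + 1))
    -- `Δ = T ∘ q` and `q ∘ T = 0`
    (hΔ_eq : ∀ a : V, Δ a = T (q a))
    (hqT : ∀ x : W, q (T x) = 0) :
    ∀ {i j : ℤ} {x y : W}, x ∈ HA i → y ∈ HA j →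
      T (gysinBracket q T i x y) = - bvBracket Δ (i + 1) (T x) (T y) := by
  intro i j x y hx hy
  have h1 : Δ (T x) = 0 := by rw [hΔ_eq, hqT, map_zero]
  have h2 : Δ (T y) = 0 := by rw [hΔ_eq, hqT, map_zero]
  have hs : gsgn (i + 1) = -gsgn i := by simp [gsgn, zpow_add]
  simp [gysinBracket, bvBracket, h1, h2, map_zsmul, ← hΔ_eq, hs, neg_smul]
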